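/- arXiv:2302.10844 — 2 statements merged into one kernel-verified Lean document; each statement's English description precedes it below -/
import Mathlib

section
/- There exist absolute constants c, C > 0 such that the following holds. Let α, ρ, ε > 0 with ε ≤ c·α, let n ≥ C·log(d)/α, let η*_1, …, η*_n be i.i.d. copies of an (α,ρ)-semi-product random vector in ℝ^d, and let μ* ∈ ℝ^d. Then with probability at least 1 − exp(−c·α·n) over the samples, the following event holds: for every ε-corruption y_1, …, y_n of μ* + η*_1, …, μ* + η*_n, every w ∈ W_{2ε}, and every u ∈ ℝ^d with ‖u‖_∞ ≤ ρ, one has L^w(μ* + u) − L^w(μ*) − ⟨∇L^w(μ*), u⟩ ≥ (α/4)·‖u‖², where L^w is the weighted loss for the entry-wise Huber loss F_{2ρ}. -/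
open MeasureTheory ProbabilityTheory Real
open scoped BigOperators ENNReal NNReal Classical

noncomputable section

/-- The clipping map `φ_h`: identity on `[-h, h]`, `h · sign t` outside. -/
def clip (h t : ℝ) : ℝ := if |t| ≤ h then t else h * Real.sign t

/-- The Huber penalty `Φ_h`. -/
def huber (h t : ℝ) : ℝ := if |t| ≤ h then t ^ 2 / 2 else h * |t| - h ^ 2 / 2

/-- Entry-wise Huber loss `F_h`. -/
def huberLoss {d : ℕ} (h : ℝ) (x : EuclideanSpace ℝ (Fin d)) : ℝ :=
  ∑ j, huber h (x j)

/-- Gradient of the entry-wise Huber loss: coordinatewise clipping `f_h`. -/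
def clipVec {d : ℕ} (h : ℝ) (x : EuclideanSpace ℝ (Fin d)) : EuclideanSpace ℝ (Fin d) :=
  WithLp.toLp 2 (fun j => clip h (x j))

/-- Euclidean projection onto the ball of radius `h` centered at `0`. -/
def ballProj {d : ℕ} (h : ℝ) (x : EuclideanSpace ℝ (Fin d)) : EuclideanSpace ℝ (Fin d) :=
  if ‖x‖ ≤ h then x else (h / ‖x‖) • x

/-- `y` is an `ε`-corruption of `ystar`: they differ in at most `ε·n` positions. -/
def IsCorruption {E : Type*} {n : ℕ} (ε : ℝ) (ystar y : Fin n → E) : Prop :=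
  ({i : Fin n | y i ≠ ystar i}.ncard : ℝ) ≤ ε * n

/-- The weight set `W_ε`. -/
def weightSet (n : ℕ) (ε : ℝ) : Set (Fin n → ℝ) :=
  {w | (∀ i, 0 ≤ w i ∧ w i ≤ 1 / n) ∧ ∑ i, |w i - 1 / n| ≤ ε}

/-- The weighted loss `L^w(μ) = Σ_i w_i F(μ - y_i)`. -/
def wLoss {d n : ℕ} (F : EuclideanSpace ℝ (Fin d) → ℝ) (y : Fin n → EuclideanSpace ℝ (Fin d))
    (w : Fin n → ℝ) (μ : EuclideanSpace ℝ (Fin d)) : ℝ :=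
  ∑ i, w i * F (μ - y i)

/-- An (α,ρ)-semi-product random vector. -/
structure IsSemiProduct {Ω : Type*} [MeasurableSpace Ω] (P : Measure Ω) {d : ℕ} (α ρ : ℝ)
    (η : Ω → EuclideanSpace ℝ (Fin d)) : Prop where
  meas : Measurable η
  symm : ∀ j : Fin d, IdentDistrib (fun ω => η ω j) (fun ω => -(η ω j)) P P
  mass : ∀ j : Fin d, ENNReal.ofReal α ≤ P {ω | |η ω j| ≤ ρ}
  indep_sign_abs :
    IndepFun (fun ω => fun j : Fin d => Real.sign (η ω j))
      (fun ω => fun j : Fin d => |η ω j|) P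
  iIndep_sign :
    iIndepFun (fun j ω => Real.sign (η ω j)) P

/-- i.i.d. copies of an (α,ρ)-semi-product random vector. -/
def IsIIDSemiProduct {Ω : Type*} [MeasurableSpace Ω] (P : Measure Ω) {d n : ℕ} (α ρ : ℝ)
    (η : Fin n → Ω → EuclideanSpace ℝ (Fin d)) : Prop :=
  iIndepFun η P ∧
    (∀ i, IsSemiProduct P α ρ (η i)) ∧
    ∀ i j, IdentDistrib (η i) (η j) P P

/-- Outer product `x xᵀ` as a matrix. -/
def outerProd {d : ℕ} (x : EuclideanSpace ℝ (Fin d)) : Matrix (Fin d) (Fin d) ℝ :=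
  Matrix.of fun i j => x i * x j

/-- Operator (spectral) norm of a matrix, acting on Euclidean space. -/
def matOpNorm {d : ℕ} (M : Matrix (Fin d) (Fin d) ℝ) : ℝ :=
  ‖LinearMap.toContinuousLinearMap (Matrix.toEuclideanLin M)‖

/-- Frobenius norm of a matrix. -/
def frobNorm {d : ℕ} (M : Matrix (Fin d) (Fin d) ℝ) : ℝ :=
  Real.sqrt (∑ i, ∑ j, (M i j) ^ 2)

/-- Effective rank `r(Σ) = Tr(Σ)/‖Σ‖`. -/
def effRank {d : ℕ} (M : Matrix (Fin d) (Fin d) ℝ) : ℝ :=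
  M.trace / matOpNorm M

/-- Quadratic form `vᵀ M v`. -/
def quadForm {d : ℕ} (M : Matrix (Fin d) (Fin d) ℝ) (v : EuclideanSpace ℝ (Fin d)) : ℝ :=
  ∑ i, ∑ j, v i * M i j * v j

/-- The uniform (rotation-invariant) probability distribution on the unit sphere of `ℝ^d`. -/
def IsUniformOnSphere {d : ℕ} (μ : Measure (EuclideanSpace ℝ (Fin d))) : Prop :=
  IsProbabilityMeasure μ ∧ μ (Metric.sphere (0 : EuclideanSpace ℝ (Fin d)) 1) = 1 ∧
    ∀ O : EuclideanSpace ℝ (Fin d) ≃ₗᵢ[ℝ] EuclideanSpace ℝ (Fin d), μ.map O = μ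

/-- `max_{‖v‖=1} (Σ_i w_i ⟨g i, v⟩^{2k})^{1/(2k)}`. -/
def momSup {d n : ℕ} (k : ℕ) (g : Fin n → EuclideanSpace ℝ (Fin d)) (w : Fin n → ℝ) : ℝ :=
  sSup {x : ℝ | ∃ v : EuclideanSpace ℝ (Fin d), ‖v‖ = 1 ∧
    x = (∑ i, w i * (inner ℝ (g i) v : ℝ) ^ (2 * k)) ^ ((1 : ℝ) / (2 * k))}

/-- The random vector `R · Σ^{1/2} · U`. -/
def ellSample {Ω : Type*} {d : ℕ} (Ssqrt : Matrix (Fin d) (Fin d) ℝ) (R : Ω → ℝ)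
    (U : Ω → EuclideanSpace ℝ (Fin d)) : Ω → EuclideanSpace ℝ (Fin d) :=
  fun ω => R ω • Matrix.toEuclideanLin Ssqrt (U ω)


/-! The Bregman remainder of `Φ_h` is nonnegative (`Φ_h` is convex with derivative `φ_h`) and
equals `s²/2` in the quadratic regime. On a fixed coordinate, a Chernoff bound shows that with
probability `1 - exp(-αn/32)` more than `3αn/4` of the clean samples lie within `ρ` of `μ*`; at most
`εn` of them are corrupted and the weights of `W_{2ε}` can remove at most `2ε` of mass, so the
samples in the quadratic regime keep weight at least `α/2`, which gives curvature `α/2` in that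
coordinate. A union bound over the `d` coordinates costs a factor `d ≤ exp(αn/64)`. -/

open Finset

def huberBregman (h y s : ℝ) : ℝ := huber h (y + s) - huber h y - clip h y * s

lemma huberBregman_nonneg {h : ℝ} (hh : 0 ≤ h) (y s : ℝ) : 0 ≤ huberBregman h y s := by
  unfold huberBregman huber clip
  rcases lt_trichotomy y 0 with hy | rfl | hy
  · simp only [Real.sign_of_neg hy]
    split_ifs <;> cases abs_cases y <;> cases abs_cases (y + s) <;> nlinarith [sq_nonneg s]
  · simp only [Real.sign_zero]
    split_ifs <;> cases abs_cases s <;> nlinarith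
  · simp only [Real.sign_of_pos hy]
    split_ifs <;> cases abs_cases y <;> cases abs_cases (y + s) <;> nlinarith [sq_nonneg s]

lemma huberBregman_eq_of_abs_le {h y s : ℝ} (hy : |y| ≤ h) (hys : |y + s| ≤ h) :
    huberBregman h y s = s ^ 2 / 2 := by
  simp only [huberBregman, huber, clip, if_pos hy, if_pos hys]
  ring

lemma sum_mul_sq_le_sum_mul_huberBregman {ι : Type*} [Fintype ι] {h ρ s : ℝ} {m w : ι → ℝ}
    {G : Finset ι} (hρh : 2 * ρ ≤ h) (hw : ∀ i, 0 ≤ w i) (hG : ∀ i ∈ G, |m i| ≤ ρ)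
    (hs : |s| ≤ ρ) :
    (∑ i ∈ G, w i) * (s ^ 2 / 2) ≤ ∑ i, w i * huberBregman h (m i) s := by
  have hh : 0 ≤ h := by linarith [abs_nonneg s]
  calc (∑ i ∈ G, w i) * (s ^ 2 / 2) = ∑ i ∈ G, w i * huberBregman h (m i) s := by
        rw [sum_mul]
        refine sum_congr rfl fun i hi => ?_
        have hm := hG i hi
        rw [huberBregman_eq_of_abs_le (by linarith) ((abs_add_le _ _).trans (by linarith))]
    _ ≤ ∑ i, w i * huberBregman h (m i) s :=
        sum_le_sum_of_subset_of_nonneg (subset_univ G)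
          fun i _ _ => mul_nonneg (hw i) (huberBregman_nonneg hh _ _)

lemma wLoss_huberLoss_bregman_eq {d n : ℕ} (h : ℝ) (y : Fin n → EuclideanSpace ℝ (Fin d))
    (w : Fin n → ℝ) (μ u : EuclideanSpace ℝ (Fin d)) :
    wLoss (huberLoss h) y w (μ + u) - wLoss (huberLoss h) y w μ -
        (inner ℝ (∑ i, w i • clipVec h (μ - y i)) u : ℝ) =
      ∑ j, ∑ i, w i * huberBregman h ((μ - y i) j) (u j) := by
  rw [sum_comm]
  simp only [wLoss, huberLoss, huberBregman, sum_inner, PiLp.inner_apply, PiLp.smul_apply,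
    smul_eq_mul, RCLike.inner_apply, conj_trivial, clipVec, mul_sum, ← sum_sub_distrib]
  refine sum_congr rfl fun i _ => sum_congr rfl fun j _ => ?_
  simp only [PiLp.add_apply, PiLp.sub_apply, add_sub_right_comm]
  ring

lemma card_div_sub_le_sum_of_mem_weightSet {n : ℕ} {ε : ℝ} {w : Fin n → ℝ}
    (hw : w ∈ weightSet n ε) (S : Finset (Fin n)) : (#S : ℝ) / n - ε ≤ ∑ i ∈ S, w i := by
  have hdev : ∑ i ∈ S, (1 / n - w i) ≤ ε :=
    calc ∑ i ∈ S, (1 / n - w i) ≤ ∑ i ∈ S, |w i - 1 / n| :=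
          sum_le_sum fun i _ => by rw [abs_sub_comm]; exact le_abs_self _
      _ ≤ ∑ i, |w i - 1 / n| :=
          sum_le_sum_of_subset_of_nonneg (subset_univ S) fun _ _ _ => abs_nonneg _
      _ ≤ ε := hw.2
  rw [sum_sub_distrib, sum_const, nsmul_eq_mul, ← div_eq_mul_one_div] at hdev
  linarith

lemma mul_sq_norm_le_wLoss_bregman {d n : ℕ} {α ρ ε : ℝ} (hεα : ε ≤ α / 12)
    (e y : Fin n → EuclideanSpace ℝ (Fin d)) (μ : EuclideanSpace ℝ (Fin d))
    (hclean : ∀ j, 3 / 4 * (α * n) < #{i | |e i j| ≤ ρ})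
    (hy : IsCorruption ε (fun i => μ + e i) y) {w : Fin n → ℝ} (hw : w ∈ weightSet n (2 * ε))
    {u : EuclideanSpace ℝ (Fin d)} (hu : ∀ j, |u j| ≤ ρ) :
    α / 4 * ‖u‖ ^ 2 ≤
      wLoss (huberLoss (2 * ρ)) y w (μ + u) - wLoss (huberLoss (2 * ρ)) y w μ -
        (inner ℝ (∑ i, w i • clipVec (2 * ρ) (μ - y i)) u : ℝ) := by
  rw [wLoss_huberLoss_bregman_eq, EuclideanSpace.real_norm_sq_eq, mul_sum]
  refine sum_le_sum fun j _ => ?_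
  set H : Finset (Fin n) := {i | |e i j| ≤ ρ}
  set B : Finset (Fin n) := {i | y i ≠ μ + e i}
  set G := H \ B
  have hB : (#B : ℝ) ≤ ε * n := by
    simpa [IsCorruption, B, ← Set.ncard_coe_finset] using hy
  have hn : (0 : ℝ) < n := by
    have : (#H : ℝ) ≤ n := by exact_mod_cast card_le_univ _ |>.trans (by simp)
    nlinarith [hclean j]
  have hG : (#H : ℝ) ≤ #G + #B := by exact_mod_cast card_le_card_sdiff_add_card
  have hGw : α / 2 ≤ ∑ i ∈ G, w i := by
    have := card_div_sub_le_sum_of_mem_weightSet hw G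
    have : 3 / 4 * α - ε < #G / n := by
      rw [lt_div_iff₀ hn]
      nlinarith [hclean j]
    linarith
  have hquad : ∀ i ∈ G, |(μ - y i) j| ≤ ρ := by
    intro i hi
    simp only [G, H, B, mem_sdiff, mem_filter, mem_univ, true_and, not_not] at hi
    simpa [hi.2] using hi.1
  calc α / 4 * u j ^ 2 ≤ (∑ i ∈ G, w i) * (u j ^ 2 / 2) := by nlinarith [sq_nonneg (u j)]
    _ ≤ _ := sum_mul_sq_le_sum_mul_huberBregman le_rfl (fun i => (hw.1 i).1) hquad (hu j)

section Chernoff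

lemma exp_mul_indicator_one {Ω : Type*} (A : Set Ω) (t : ℝ) (ω : Ω) :
    exp (t * A.indicator 1 ω) = A.indicator (fun _ => exp t - 1) ω + 1 := by
  by_cases hω : ω ∈ A <;> simp [hω]

lemma natCast_card_filter_mem_eq_sum_indicator {ι Ω : Type*} [Fintype ι] (A : ι → Set Ω)
    (ω : Ω) : (#{i | ω ∈ A i} : ℝ) = ∑ i, (A i).indicator 1 ω := by
  simp [Set.indicator_apply]

variable {Ω : Type*} [MeasurableSpace Ω] {P : Measure Ω}

lemma mgf_indicator_one [IsProbabilityMeasure P] {A : Set Ω} (hA : MeasurableSet A) (t : ℝ) :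
    mgf (A.indicator 1) P t = (exp t - 1) * P.real A + 1 := by
  simp only [mgf, exp_mul_indicator_one]
  rw [integral_add ((integrable_const _).indicator hA) (integrable_const 1),
    integral_indicator_const _ hA, integral_const, probReal_univ, smul_eq_mul, smul_eq_mul,
    mul_comm, one_mul]

lemma exp_neg_quarter_le : exp (-(1 / 4)) ≤ 32 / 41 := by
  have := quadratic_le_exp_of_nonneg (x := 1 / 4) (by norm_num)
  rw [exp_neg, inv_le_comm₀ (exp_pos _) (by norm_num)]
  linarith

lemma measureReal_card_mem_le_le_exp {ι : Type*} [Fintype ι] {A : ι → Set Ω} {α : ℝ}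
    (hα : 0 ≤ α) (hA : ∀ i, MeasurableSet (A i))
    (hind : iIndepFun (fun i => (A i).indicator (1 : Ω → ℝ)) P) (hPA : ∀ i, α ≤ P.real (A i)) :
    P.real {ω | (#{i | ω ∈ A i} : ℝ) ≤ 3 / 4 * (α * Fintype.card ι)} ≤
      exp (-(α * Fintype.card ι / 32)) := by
  have := hind.isProbabilityMeasure
  have hmeas : ∀ i, Measurable ((A i).indicator (1 : Ω → ℝ)) :=
    fun i => measurable_const.indicator (hA i)
  have hmgf : ∀ i, mgf ((A i).indicator 1) P (-(1 / 4)) ≤ exp ((exp (-(1 / 4)) - 1) * α) := by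
    intro i
    have : exp (-(1 / 4)) ≤ 1 := exp_le_one_iff.2 (by norm_num)
    rw [mgf_indicator_one (hA i)]
    nlinarith [add_one_le_exp ((exp (-(1 / 4)) - 1) * α), hPA i]
  have hchernoff := measure_le_le_exp_mul_mgf (3 / 4 * (α * Fintype.card ι))
    (by norm_num : -(1 / 4 : ℝ) ≤ 0)
    (hind.integrable_exp_mul_sum hmeas (s := univ) fun i _ => by
      simp only [exp_mul_indicator_one]
      exact ((integrable_const _).indicator (hA i)).add (integrable_const 1))
  rw [hind.mgf_sum hmeas] at hchernoff
  simp only [natCast_card_filter_mem_eq_sum_indicator, ← Finset.sum_apply]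
  calc _ ≤ exp (1 / 4 * (3 / 4 * (α * Fintype.card ι))) *
          ∏ i : ι, mgf ((A i).indicator 1) P (-(1 / 4)) := by simpa using hchernoff
    _ ≤ exp (1 / 4 * (3 / 4 * (α * Fintype.card ι))) *
          exp ((exp (-(1 / 4)) - 1) * α) ^ Fintype.card ι := by
        gcongr
        exact (prod_le_prod (fun i _ => mgf_nonneg) fun i _ => hmgf i).trans_eq (by simp)
    _ = exp (α * Fintype.card ι * (3 / 16 + exp (-(1 / 4)) - 1)) := by
        rw [← exp_nat_mul, ← exp_add]
        ring_nf
    _ ≤ exp (-(α * Fintype.card ι / 32)) := by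
        have := exp_neg_quarter_le
        gcongr
        nlinarith [mul_nonneg hα (Nat.cast_nonneg (α := ℝ) (Fintype.card ι))]

end Chernoff

lemma natCast_mul_exp_neg_le_exp_neg {d : ℕ} {a b : ℝ} (h : log d ≤ a - b) :
    d * exp (-a) ≤ exp (-b) := by
  rcases Nat.eq_zero_or_pos d with rfl | hd
  · simpa using (exp_pos _).le
  · rw [← exp_log (Nat.cast_pos.2 hd), ← exp_add]
    exact exp_le_exp.2 (by linarith)

lemma le_measure_forall_lt_card_abs_le {Ω : Type*} [MeasurableSpace Ω] {P : Measure Ω}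
    {d n : ℕ} {α ρ : ℝ} (hα : 0 < α) (hn : 64 * log d / α ≤ n)
    {η : Fin n → Ω → EuclideanSpace ℝ (Fin d)} (hη : IsIIDSemiProduct P α ρ η) :
    ENNReal.ofReal (1 - exp (-(1 / 64 * α * n))) ≤
      P {ω | ∀ j, 3 / 4 * (α * n) < #{i | |η i ω j| ≤ ρ}} := by
  obtain ⟨hind, hsp, -⟩ := hη
  have := hind.isProbabilityMeasure
  set A : Fin d → Fin n → Set Ω := fun j i => η i ⁻¹' {x | |x j| ≤ ρ}
  set Bad : Fin d → Set Ω := fun j => {ω | (#{i | ω ∈ A j i} : ℝ) ≤ 3 / 4 * (α * n)}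
  have hS : ∀ j, MeasurableSet {x : EuclideanSpace ℝ (Fin d) | |x j| ≤ ρ} := fun j =>
    measurableSet_le (by fun_prop) measurable_const
  have hA : ∀ j i, MeasurableSet (A j i) := fun j i => (hsp i).meas (hS j)
  have hBad : ∀ j, P.real (Bad j) ≤ exp (-(α * n / 32)) := by
    intro j
    have hind_j : iIndepFun (fun i => (A j i).indicator (1 : Ω → ℝ)) P := by
      exact hind.comp (fun _ => {x | |x j| ≤ ρ}.indicator (1 : EuclideanSpace ℝ (Fin d) → ℝ))
        fun _ => measurable_const.indicator (hS j)
    have hmass : ∀ i, α ≤ P.real (A j i) := fun i =>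
      (ENNReal.ofReal_le_iff_le_toReal (measure_ne_top _ _)).1 ((hsp i).mass j)
    simpa only [Fintype.card_fin] using measureReal_card_mem_le_le_exp hα.le (hA j) hind_j hmass
  have hgood : {ω | ∀ j, 3 / 4 * (α * n) < #{i | |η i ω j| ≤ ρ}} = (⋃ j, Bad j)ᶜ := by
    ext ω
    simp [Bad, A]
  have hlog : log d ≤ α * n / 32 - 1 / 64 * α * n := by
    rw [div_le_iff₀ hα] at hn
    linarith
  rw [hgood, ← ENNReal.ofReal_toReal (measure_ne_top P _)]
  refine ENNReal.ofReal_le_ofReal ?_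
  have hBadMeas : ∀ j, MeasurableSet (Bad j) := fun j => by
    simp only [Bad, natCast_card_filter_mem_eq_sum_indicator]
    exact measurableSet_le (measurable_sum _ fun i _ => measurable_const.indicator (hA j i))
      measurable_const
  rw [← measureReal_def, probReal_compl_eq_one_sub (.iUnion hBadMeas), sub_le_sub_iff_left]
  calc P.real (⋃ j, Bad j) ≤ ∑ j, P.real (Bad j) := measureReal_iUnion_fintype_le _
    _ ≤ d * exp (-(α * n / 32)) := by
        simpa using sum_le_sum fun j (_ : j ∈ univ) => hBad j
    _ ≤ exp (-(1 / 64 * α * n)) := natCast_mul_exp_neg_le_exp_neg hlog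

/-- local strong convexity of the entry-wise Huber loss for
semi-product distributions. -/
theorem local_strong_convexity_semiProduct :
    ∃ c C : ℝ, 0 < c ∧ 0 < C ∧
      ∀ (d n : ℕ) (Ω : Type) (_ : MeasurableSpace Ω) (P : Measure Ω),
        IsProbabilityMeasure P →
      ∀ (α ρ ε : ℝ), 0 < α → 0 < ρ → 0 < ε → ε ≤ c * α →
        C * Real.log d / α ≤ n →
      ∀ η : Fin n → Ω → EuclideanSpace ℝ (Fin d),
        IsIIDSemiProduct P α ρ η →
      ∀ μstar : EuclideanSpace ℝ (Fin d),
        ENNReal.ofReal (1 - Real.exp (-(c * α * n))) ≤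
          P {ω | ∀ y : Fin n → EuclideanSpace ℝ (Fin d),
            IsCorruption ε (fun i => μstar + η i ω) y →
            ∀ w ∈ weightSet n (2 * ε),
            ∀ u : EuclideanSpace ℝ (Fin d), (∀ j, |u j| ≤ ρ) →
              α / 4 * ‖u‖ ^ 2 ≤
                wLoss (huberLoss (2 * ρ)) y w (μstar + u) -
                  wLoss (huberLoss (2 * ρ)) y w μstar -
                  (inner ℝ (∑ i, w i • clipVec (2 * ρ) (μstar - y i)) u : ℝ)} := by
  refine ⟨1 / 64, 64, by norm_num, by norm_num, ?_⟩
  intro d n Ω _ P _ α ρ ε hα _ _ hεα hn η hη μstar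
  refine (le_measure_forall_lt_card_abs_le hα hn hη).trans (measure_mono ?_)
  intro ω hclean y hy w hw u hu
  exact mul_sq_norm_le_wLoss_bregman (by linarith) (fun i => η i ω) y μstar hclean hy hw hu
end
end

section
/- Let α, ρ > 0, let η_1, …, η_n be i.i.d. copies of an (α,ρ)-semi-product random vector in ℝ^d, and let f = f_{2ρ} be the gradient of the entry-wise Huber loss with parameter 2ρ. Then for every δ ∈ (0,1), with probability at least 1−δ, ‖(1/n)·Σ_{i=1}^n f(η_i)‖ ≤ 10·ρ·√((d + log(1/δ))/n). -/
/-!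
Write `S = Σᵢ f_h(ηᵢ)` with `h = 2ρ`. Coordinatewise `f_h(η)_j = sign η_j · min |η_j| h`; the signs
are independent, symmetric and independent of the absolute values, so conditioning on the latter
gives `E exp ⟪c, f_h(η)⟫ ≤ exp (h² ‖c‖² / 2)` for every `c`, and independence of the `ηᵢ` gives
`E exp ⟪c, S⟫ ≤ exp (n h² ‖c‖² / 2)`. Linearising `exp (‖S‖² / (4 n h²)) = E_g exp ⟪λ S, g⟫`
against a standard Gaussian vector `g` (with `λ² = 1 / (2 n h²)`) and exchanging the expectations
bounds `E exp (‖S‖² / (4 n h²))` by `E_g exp (‖g‖² / 4) = √2 ^ d`. Markov's inequality at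
`‖S‖ = 10 ρ √(n (d + log (1/δ)))` leaves probability at most
`√2 ^ d · exp (-25 (d + log (1/δ)) / 4) ≤ δ`.
-/

open MeasureTheory ProbabilityTheory Real
open scoped BigOperators ENNReal NNReal Classical

noncomputable section

open Finset

lemma Real.measurable_sign : Measurable Real.sign := by
  have : Real.sign = fun r : ℝ => if r < 0 then -1 else if 0 < r then 1 else 0 := rfl
  rw [this]
  exact Measurable.ite (measurableSet_lt measurable_id measurable_const) measurable_const
    (Measurable.ite (measurableSet_lt measurable_const measurable_id) measurable_const
      measurable_const)

lemma Real.sign_mul_abs (t : ℝ) : Real.sign t * |t| = t := by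
  rcases lt_trichotomy t 0 with ht | rfl | ht
  · rw [Real.sign_of_neg ht, abs_of_neg ht, neg_one_mul, neg_neg]
  · simp
  · rw [Real.sign_of_pos ht, abs_of_pos ht, one_mul]

lemma clip_eq_sign_mul_min (h t : ℝ) : clip h t = Real.sign t * min |t| h := by
  unfold clip
  split_ifs with ht
  · rw [min_eq_left ht, Real.sign_mul_abs]
  · rw [min_eq_right (le_of_not_ge ht), mul_comm]

lemma measurable_clip (h : ℝ) : Measurable (clip h) :=
  Measurable.ite (measurableSet_le measurable_id.abs measurable_const) measurable_id
    (measurable_const.mul Real.measurable_sign)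

lemma measurable_clipVec {d : ℕ} (h : ℝ) : Measurable (clipVec (d := d) h) :=
  (WithLp.measurable_toLp 2 _).comp <| measurable_pi_lambda _ fun j =>
    (measurable_clip h).comp ((measurable_pi_apply j).comp (WithLp.measurable_ofLp 2 _))

lemma ENNReal.ofReal_exp_sum {ι : Type*} (s : Finset ι) (f : ι → ℝ) :
    ENNReal.ofReal (rexp (∑ i ∈ s, f i)) = ∏ i ∈ s, ENNReal.ofReal (rexp (f i)) := by
  rw [Real.exp_sum, ENNReal.ofReal_prod_of_nonneg fun i _ => (Real.exp_pos _).le]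

theorem lintegral_fintype_prod_eq_prod {ι : Type*} [Fintype ι] {E : ι → Type*}
    [∀ i, MeasurableSpace (E i)] (μ : ∀ i, Measure (E i)) [∀ i, IsProbabilityMeasure (μ i)]
    (f : ∀ i, E i → ℝ≥0∞) (hf : ∀ i, Measurable (f i)) :
    ∫⁻ x, ∏ i, f i (x i) ∂Measure.pi μ = ∏ i, ∫⁻ t, f i t ∂μ i := by
  rw [lintegral_prod_eq_prod_lintegral_of_indepFun _ _
    (iIndepFun_pi fun i => (hf i).aemeasurable) fun i => (hf i).comp (measurable_pi_apply i)]
  exact prod_congr rfl fun i _ => (measurePreserving_eval μ i).lintegral_comp (hf i)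

lemma lintegral_exp_mul_gaussianReal (c : ℝ) :
    ∫⁻ x, ENNReal.ofReal (rexp (c * x)) ∂gaussianReal 0 1 = ENNReal.ofReal (rexp (c ^ 2 / 2)) := by
  rw [← ofReal_integral_eq_lintegral_ofReal (integrable_exp_mul_gaussianReal c)
    (ae_of_all _ fun _ => (Real.exp_pos _).le)]
  simpa [mgf] using congrArg ENNReal.ofReal (congrFun (mgf_fun_id_gaussianReal (μ := 0) (v := 1)) c)

lemma lintegral_exp_sq_div_four_gaussianReal :
    ∫⁻ x, ENNReal.ofReal (rexp (x ^ 2 / 4)) ∂gaussianReal 0 1 = ENNReal.ofReal √2 := by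
  rw [gaussianReal_of_var_ne_zero 0 one_ne_zero, lintegral_withDensity_eq_lintegral_mul _
    (measurable_gaussianPDF 0 1) (by fun_prop)]
  have hpdf : ∀ x : ℝ, gaussianPDF 0 1 x * ENNReal.ofReal (rexp (x ^ 2 / 4))
      = ENNReal.ofReal ((√(2 * π))⁻¹ * rexp (-4⁻¹ * x ^ 2)) := by
    intro x
    rw [gaussianPDF, ← ENNReal.ofReal_mul (gaussianPDFReal_nonneg 0 1 x), gaussianPDFReal,
      mul_assoc, ← Real.exp_add, NNReal.coe_one, mul_one]
    congr 3
    ring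
  simp_rw [Pi.mul_apply, hpdf]
  rw [← ofReal_integral_eq_lintegral_ofReal
    ((integrable_exp_neg_mul_sq (by norm_num)).const_mul _) (ae_of_all _ fun _ => by positivity),
    integral_const_mul, integral_gaussian, ← Real.sqrt_inv, ← Real.sqrt_mul (by positivity)]
  congr 2
  field_simp
  norm_num

lemma lintegral_exp_sum_mul_gaussianPi {ι : Type*} [Fintype ι] (v : ι → ℝ) :
    ∫⁻ x, ENNReal.ofReal (rexp (∑ i, v i * x i)) ∂(Measure.pi fun _ : ι => gaussianReal 0 1)
      = ENNReal.ofReal (rexp (∑ i, v i ^ 2 / 2)) := by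
  simp_rw [ENNReal.ofReal_exp_sum]
  rw [lintegral_fintype_prod_eq_prod _ (fun i t => ENNReal.ofReal (rexp (v i * t)))
    fun _ => by fun_prop]
  simp_rw [lintegral_exp_mul_gaussianReal]

lemma lintegral_exp_sum_sq_div_four_gaussianPi {ι : Type*} [Fintype ι] :
    ∫⁻ x, ENNReal.ofReal (rexp (∑ i, x i ^ 2 / 4)) ∂(Measure.pi fun _ : ι => gaussianReal 0 1)
      = ENNReal.ofReal (√2 ^ Fintype.card ι) := by
  simp_rw [ENNReal.ofReal_exp_sum]
  rw [lintegral_fintype_prod_eq_prod _ (fun _ t => ENNReal.ofReal (rexp (t ^ 2 / 4)))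
    fun _ => by fun_prop]
  simp_rw [lintegral_exp_sq_div_four_gaussianReal]
  rw [prod_const, card_univ, ENNReal.ofReal_pow (Real.sqrt_nonneg 2)]

section Probability

variable {Ω : Type*} [MeasurableSpace Ω] {P : Measure Ω}

lemma lintegral_exp_mul_le_of_symmetric [IsProbabilityMeasure P] {X : Ω → ℝ}
    (hsymm : IdentDistrib X (fun ω => -X ω) P P) (hX : ∀ ω, |X ω| ≤ 1) (c : ℝ) :
    ∫⁻ ω, ENNReal.ofReal (rexp (c * X ω)) ∂P ≤ ENNReal.ofReal (rexp (c ^ 2 / 2)) := by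
  have hflip : ∫⁻ ω, ENNReal.ofReal (rexp (c * X ω)) ∂P
      = ∫⁻ ω, ENNReal.ofReal (rexp (-(c * X ω))) ∂P := by
    simpa only [Function.comp_def, mul_neg] using
      (hsymm.comp (u := fun t => ENNReal.ofReal (rexp (c * t))) (by fun_prop)).lintegral_eq
  have hcosh : ∀ ω, rexp (c * X ω) + rexp (-(c * X ω)) ≤ 2 * rexp (c ^ 2 / 2) := fun ω =>
    calc rexp (c * X ω) + rexp (-(c * X ω)) = 2 * Real.cosh (c * X ω) := by
          rw [Real.cosh_eq]; ring
      _ ≤ 2 * Real.cosh c := by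
          gcongr 2 * ?_
          rw [Real.cosh_le_cosh, abs_mul]
          exact mul_le_of_le_one_right (abs_nonneg c) (hX ω)
      _ ≤ 2 * rexp (c ^ 2 / 2) := by gcongr; exact Real.cosh_le_exp_half_sq c
  have hmeas : AEMeasurable (fun ω => ENNReal.ofReal (rexp (c * X ω))) P :=
    (by fun_prop : Measurable fun t => ENNReal.ofReal (rexp (c * t))).comp_aemeasurable
      hsymm.aemeasurable_fst
  refine (ENNReal.mul_le_mul_iff_right (a := 2) two_ne_zero ENNReal.ofNat_ne_top).mp ?_
  calc 2 * ∫⁻ ω, ENNReal.ofReal (rexp (c * X ω)) ∂P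
      = ∫⁻ ω, ENNReal.ofReal (rexp (c * X ω) + rexp (-(c * X ω))) ∂P := by
        simp_rw [ENNReal.ofReal_add (Real.exp_pos _).le (Real.exp_pos _).le]
        rw [lintegral_add_left' hmeas, ← hflip, two_mul]
    _ ≤ ∫⁻ _, ENNReal.ofReal (2 * rexp (c ^ 2 / 2)) ∂P :=
        lintegral_mono fun ω => ENNReal.ofReal_le_ofReal (hcosh ω)
    _ = 2 * ENNReal.ofReal (rexp (c ^ 2 / 2)) := by
        rw [lintegral_const, measure_univ, mul_one, ENNReal.ofReal_mul zero_le_two,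
          ENNReal.ofReal_ofNat]

lemma ProbabilityTheory.IndepFun.lintegral_le_of_forall_le [IsProbabilityMeasure P]
    {α β : Type*} [MeasurableSpace α] [MeasurableSpace β] {X : Ω → α} {Y : Ω → β}
    (hXY : IndepFun X Y P) (hX : Measurable X) (hY : Measurable Y)
    {F : α → β → ℝ≥0∞} (hF : Measurable (Function.uncurry F)) {C : ℝ≥0∞}
    (hC : ∀ y, ∫⁻ ω, F (X ω) y ∂P ≤ C) :
    ∫⁻ ω, F (X ω) (Y ω) ∂P ≤ C := by
  have : IsProbabilityMeasure (P.map Y) := Measure.isProbabilityMeasure_map hY.aemeasurable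
  calc ∫⁻ ω, F (X ω) (Y ω) ∂P
      = ∫⁻ p, Function.uncurry F p ∂(P.map X).prod (P.map Y) := by
        rw [← (indepFun_iff_map_prod_eq_prod_map_map hX.aemeasurable hY.aemeasurable).1 hXY,
          lintegral_map hF (hX.prodMk hY)]
        rfl
    _ = ∫⁻ y, ∫⁻ x, F x y ∂P.map X ∂P.map Y := lintegral_prod_symm' _ hF
    _ ≤ ∫⁻ _, C ∂P.map Y := by
        refine lintegral_mono fun y => ?_
        rw [lintegral_map hF.of_uncurry_right hX]
        exact hC y
    _ = C := by rw [lintegral_const, measure_univ, mul_one]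

namespace IsSemiProduct

variable {d : ℕ} {α ρ : ℝ} {η : Ω → EuclideanSpace ℝ (Fin d)}

lemma measurable_apply (hη : IsSemiProduct P α ρ η) (j : Fin d) :
    Measurable fun ω => η ω j :=
  (measurable_pi_apply j).comp ((WithLp.measurable_ofLp 2 _).comp hη.meas)

lemma lintegral_exp_sum_mul_sign_le [IsProbabilityMeasure P] (hη : IsSemiProduct P α ρ η)
    (a : Fin d → ℝ) :
    ∫⁻ ω, ENNReal.ofReal (rexp (∑ j, a j * Real.sign (η ω j))) ∂P
      ≤ ENNReal.ofReal (rexp (∑ j, a j ^ 2 / 2)) := by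
  simp_rw [ENNReal.ofReal_exp_sum]
  rw [lintegral_prod_eq_prod_lintegral_of_indepFun _
    (fun j ω => ENNReal.ofReal (rexp (a j * Real.sign (η ω j))))
    (hη.iIndep_sign.comp (fun j t => ENNReal.ofReal (rexp (a j * t))) fun _ => by fun_prop)
    fun j => (by fun_prop : Measurable fun t => ENNReal.ofReal (rexp (a j * t))).comp
      (Real.measurable_sign.comp (hη.measurable_apply j))]
  refine prod_le_prod' fun j _ => lintegral_exp_mul_le_of_symmetric ?_ ?_ (a j)
  · simpa only [Function.comp_def, Real.sign_neg] using (hη.symm j).comp Real.measurable_sign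
  · intro ω
    rcases Real.sign_apply_eq (η ω j) with h | h | h <;> simp [h]

lemma lintegral_exp_sum_mul_clip_le [IsProbabilityMeasure P] (hη : IsSemiProduct P α ρ η)
    {h : ℝ} (hh : 0 ≤ h) (c : Fin d → ℝ) :
    ∫⁻ ω, ENNReal.ofReal (rexp (∑ j, c j * clip h (η ω j))) ∂P
      ≤ ENNReal.ofReal (rexp (h ^ 2 * ∑ j, c j ^ 2 / 2)) := by
  set F : (Fin d → ℝ) → (Fin d → ℝ) → ℝ≥0∞ :=
    fun e b => ENNReal.ofReal (rexp (∑ j, c j * min |b j| h * e j))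
  have hF : Measurable (Function.uncurry F) := by fun_prop
  have hclip : ∀ ω, ENNReal.ofReal (rexp (∑ j, c j * clip h (η ω j)))
      = F (fun j => Real.sign (η ω j)) (fun j => |η ω j|) := fun ω => by
    simp only [F, abs_abs, clip_eq_sign_mul_min]
    congr 2
    exact sum_congr rfl fun j _ => by ring
  simp_rw [hclip]
  refine hη.indep_sign_abs.lintegral_le_of_forall_le
    (measurable_pi_lambda _ fun j => Real.measurable_sign.comp (hη.measurable_apply j))
    (measurable_pi_lambda _ fun j => (hη.measurable_apply j).abs) hF fun b => ?_
  refine (hη.lintegral_exp_sum_mul_sign_le fun j => c j * min |b j| h).trans ?_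
  gcongr with j
  rw [mul_sum]
  refine sum_le_sum fun j _ => ?_
  have : (min |b j| h) ^ 2 ≤ h ^ 2 :=
    pow_le_pow_left₀ (le_min (abs_nonneg _) hh) (min_le_right _ _) 2
  nlinarith [sq_nonneg (c j)]

end IsSemiProduct

section Average

variable [IsProbabilityMeasure P] {d n : ℕ} {α ρ h : ℝ}
  {η : Fin n → Ω → EuclideanSpace ℝ (Fin d)}

lemma lintegral_exp_sum_mul_sum_clipVec_le (hind : iIndepFun η P)
    (hη : ∀ i, IsSemiProduct P α ρ (η i)) (hh : 0 ≤ h) (c : Fin d → ℝ) :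
    ∫⁻ ω, ENNReal.ofReal (rexp (∑ j, c j * (∑ i, clipVec h (η i ω)) j)) ∂P
      ≤ ENNReal.ofReal (rexp (n * (h ^ 2 * ∑ j, c j ^ 2 / 2))) := by
  have hswap : ∀ ω, ∑ j, c j * (∑ i, clipVec h (η i ω)) j
      = ∑ i, ∑ j, c j * clip h (η i ω j) := fun ω => by
    simp only [WithLp.ofLp_sum, Finset.sum_apply, mul_sum]
    exact sum_comm
  have hmeas : Measurable fun x : EuclideanSpace ℝ (Fin d) =>
      ENNReal.ofReal (rexp (∑ j, c j * clip h (x j))) :=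
    Measurable.ennreal_ofReal <| Real.measurable_exp.comp <| Finset.measurable_sum _ fun j _ =>
      measurable_const.mul ((measurable_clip h).comp
        ((measurable_pi_apply j).comp (WithLp.measurable_ofLp 2 _)))
  simp_rw [hswap, ENNReal.ofReal_exp_sum univ (fun i => ∑ j, _)]
  rw [lintegral_prod_eq_prod_lintegral_of_indepFun _
    (fun i ω => ENNReal.ofReal (rexp (∑ j, c j * clip h (η i ω j))))
    (hind.comp _ fun _ => hmeas) fun i => hmeas.comp (hη i).meas]
  calc ∏ i, ∫⁻ ω, ENNReal.ofReal (rexp (∑ j, c j * clip h (η i ω j))) ∂P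
      ≤ ∏ _i : Fin n, ENNReal.ofReal (rexp (h ^ 2 * ∑ j, c j ^ 2 / 2)) :=
        prod_le_prod' fun i _ => (hη i).lintegral_exp_sum_mul_clip_le hh c
    _ = ENNReal.ofReal (rexp (n * (h ^ 2 * ∑ j, c j ^ 2 / 2))) := by
        rw [prod_const, card_univ, Fintype.card_fin, Real.exp_nat_mul,
          ENNReal.ofReal_pow (Real.exp_pos _).le]

theorem lintegral_exp_norm_sum_clipVec_sq_le (hind : iIndepFun η P)
    (hη : ∀ i, IsSemiProduct P α ρ (η i)) (hh : 0 ≤ h) :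
    ∫⁻ ω, ENNReal.ofReal (rexp (‖∑ i, clipVec h (η i ω)‖ ^ 2 / (4 * n * h ^ 2))) ∂P
      ≤ ENNReal.ofReal (√2 ^ d) := by
  set S : Ω → EuclideanSpace ℝ (Fin d) := fun ω => ∑ i, clipVec h (η i ω)
  set lam := √((2 * n * h ^ 2)⁻¹)
  have hlam : lam ^ 2 = (2 * n * h ^ 2)⁻¹ := Real.sq_sqrt (by positivity)
  have hnlam : n * h ^ 2 * lam ^ 2 ≤ 1 / 2 := by
    rw [hlam]
    rcases (by positivity : (0 : ℝ) ≤ n * h ^ 2).eq_or_lt with h0 | h0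
    · rw [← h0]; norm_num
    · rw [mul_inv_le_iff₀ (by linarith)]; linarith
  have hS : Measurable S :=
    Finset.measurable_sum _ fun i _ => (measurable_clipVec h).comp (hη i).meas
  have hSj : ∀ j, Measurable fun ω => S ω j := fun j =>
    (measurable_pi_apply j).comp ((WithLp.measurable_ofLp 2 _).comp hS)
  have hlin : ∀ ω, ‖S ω‖ ^ 2 / (4 * n * h ^ 2) = ∑ j, (lam * S ω j) ^ 2 / 2 := fun ω => by
    simp only [EuclideanSpace.norm_sq_eq, Real.norm_eq_abs, sq_abs, mul_pow, hlam, ← sum_div,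
      ← mul_sum]
    ring
  calc ∫⁻ ω, ENNReal.ofReal (rexp (‖S ω‖ ^ 2 / (4 * n * h ^ 2))) ∂P
      = ∫⁻ ω, ∫⁻ x, ENNReal.ofReal (rexp (∑ j, lam * S ω j * x j))
          ∂(Measure.pi fun _ : Fin d => gaussianReal 0 1) ∂P := by
        simp_rw [lintegral_exp_sum_mul_gaussianPi, hlin]
    _ = ∫⁻ x, ∫⁻ ω, ENNReal.ofReal (rexp (∑ j, lam * x j * S ω j)) ∂P
          ∂(Measure.pi fun _ : Fin d => gaussianReal 0 1) := by
        simp_rw [mul_right_comm lam]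
        exact lintegral_lintegral_swap (by fun_prop)
    _ ≤ ∫⁻ x, ENNReal.ofReal (rexp (∑ j, x j ^ 2 / 4))
          ∂(Measure.pi fun _ : Fin d => gaussianReal 0 1) := by
        refine lintegral_mono fun x => ?_
        refine (lintegral_exp_sum_mul_sum_clipVec_le hind hη hh _).trans ?_
        gcongr
        simp only [mul_pow, mul_sum, ← mul_assoc]
        refine sum_le_sum fun j _ => ?_
        nlinarith [sq_nonneg (x j)]
    _ = ENNReal.ofReal (√2 ^ d) := by
        rw [lintegral_exp_sum_sq_div_four_gaussianPi, Fintype.card_fin]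

end Average

lemma ofReal_one_sub_le_measure_of_lintegral_exp_sq_le [IsProbabilityMeasure P] {Z : Ω → ℝ}
    (hZ : Measurable Z) {s u δ : ℝ} (hs : 0 ≤ s) (hu : 0 ≤ u) (hδ : 0 ≤ δ)
    (hmgf : ∫⁻ ω, ENNReal.ofReal (rexp (s * Z ω ^ 2)) ∂P
      ≤ ENNReal.ofReal (δ * rexp (s * u ^ 2))) :
    ENNReal.ofReal (1 - δ) ≤ P {ω | Z ω ≤ u} := by
  have htail : P {ω | u < Z ω} ≤ ENNReal.ofReal δ := by
    refine (ENNReal.mul_le_mul_iff_right (a := ENNReal.ofReal (rexp (s * u ^ 2)))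
      (ENNReal.ofReal_pos.2 (Real.exp_pos _)).ne' ENNReal.ofReal_ne_top).1 ?_
    have hsub : {ω | u < Z ω} ⊆ {ω | ENNReal.ofReal (rexp (s * u ^ 2))
        ≤ ENNReal.ofReal (rexp (s * Z ω ^ 2))} := fun ω (hω : u < Z ω) => by
      change ENNReal.ofReal _ ≤ ENNReal.ofReal _
      gcongr
    calc ENNReal.ofReal (rexp (s * u ^ 2)) * P {ω | u < Z ω}
        ≤ ENNReal.ofReal (rexp (s * u ^ 2)) * P {ω | ENNReal.ofReal (rexp (s * u ^ 2))
            ≤ ENNReal.ofReal (rexp (s * Z ω ^ 2))} := by gcongr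
      _ ≤ ∫⁻ ω, ENNReal.ofReal (rexp (s * Z ω ^ 2)) ∂P :=
          mul_meas_ge_le_lintegral (by fun_prop) _
      _ ≤ ENNReal.ofReal (rexp (s * u ^ 2)) * ENNReal.ofReal δ := by
          rwa [← ENNReal.ofReal_mul (Real.exp_pos _).le, mul_comm]
  have hcompl : {ω | Z ω ≤ u} = {ω | u < Z ω}ᶜ := by ext; simp
  rw [hcompl, prob_compl_eq_one_sub (measurableSet_lt measurable_const hZ),
    ENNReal.ofReal_sub _ hδ, ENNReal.ofReal_one]
  exact tsub_le_tsub_left htail 1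

end Probability

lemma sqrt_two_pow_le_mul_exp (d : ℕ) {δ : ℝ} (hδ0 : 0 < δ) (hδ1 : δ ≤ 1) :
    √2 ^ d ≤ δ * rexp (25 / 4 * (d + Real.log (1 / δ))) := by
  have hL : 0 ≤ Real.log (1 / δ) := Real.log_nonneg (one_le_one_div hδ0 hδ1)
  have hlog2 : Real.log 2 ≤ 1 := (Real.log_le_sub_one_of_pos two_pos).trans (by norm_num)
  have hδexp : δ = rexp (-Real.log (1 / δ)) := by
    rw [one_div, Real.log_inv, neg_neg, Real.exp_log hδ0]
  rw [← Real.exp_log (pow_pos (Real.sqrt_pos.2 two_pos) d), Real.log_pow,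
    Real.log_sqrt zero_le_two, hδexp, ← Real.exp_add, ← hδexp]
  gcongr
  nlinarith [(Nat.cast_nonneg d : (0 : ℝ) ≤ d)]

theorem gradient_bound_semiProduct_general
    {d n : ℕ} {Ω : Type*} [MeasurableSpace Ω] (P : Measure Ω) [IsProbabilityMeasure P]
    (α ρ : ℝ) (hρ : 0 < ρ)
    (η : Fin n → Ω → EuclideanSpace ℝ (Fin d))
    (hiid : IsIIDSemiProduct P α ρ η)
    (δ : ℝ) (hδ : δ ∈ Set.Ioo (0 : ℝ) 1) :
    ENNReal.ofReal (1 - δ) ≤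
      P {ω | ‖(n : ℝ)⁻¹ • ∑ i, clipVec (2 * ρ) (η i ω)‖ ≤
        10 * ρ * Real.sqrt ((d + Real.log (1 / δ)) / n)} := by
  obtain ⟨hδ0, hδ1⟩ := hδ
  obtain ⟨hind, hη, -⟩ := hiid
  rcases n.eq_zero_or_pos with rfl | hn
  · have hu : 0 ≤ 10 * ρ * √((d + Real.log (1 / δ)) / (0 : ℕ)) := by positivity
    simp only [univ_eq_empty, sum_empty, smul_zero, norm_zero, hu, Set.ofPred_true, measure_univ]
    exact ENNReal.ofReal_le_one.2 (by linarith)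
  have hS : Measurable fun ω => ∑ i, clipVec (2 * ρ) (η i ω) :=
    Finset.measurable_sum _ fun i _ => (measurable_clipVec _).comp (hη i).meas
  refine ofReal_one_sub_le_measure_of_lintegral_exp_sq_le (s := n / (16 * ρ ^ 2))
    (Z := fun ω => ‖(n : ℝ)⁻¹ • ∑ i, clipVec (2 * ρ) (η i ω)‖)
    (by fun_prop) (by positivity) (by positivity) hδ0.le ?_
  have hscale : ∀ v : EuclideanSpace ℝ (Fin d),
      n / (16 * ρ ^ 2) * ‖(n : ℝ)⁻¹ • v‖ ^ 2 = ‖v‖ ^ 2 / (4 * n * (2 * ρ) ^ 2) := fun v => by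
    rw [norm_smul, Real.norm_eq_abs, abs_inv, Nat.abs_cast]
    field_simp
    ring
  have hexponent : n / (16 * ρ ^ 2) * (10 * ρ * √((d + Real.log (1 / δ)) / n)) ^ 2
      = 25 / 4 * (d + Real.log (1 / δ)) := by
    have hL : 0 ≤ Real.log (1 / δ) := Real.log_nonneg (one_le_one_div hδ0 hδ1.le)
    rw [mul_pow, Real.sq_sqrt (by positivity)]
    field_simp
    ring
  simp_rw [hscale, hexponent]
  exact (lintegral_exp_norm_sum_clipVec_sq_le hind hη (by positivity)).trans
    (ENNReal.ofReal_le_ofReal (sqrt_two_pow_le_mul_exp d hδ0 hδ1.le))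

/-- concentration of the average clipped noise. -/
theorem gradient_bound_semiProduct
    {d n : ℕ} {Ω : Type*} [MeasurableSpace Ω] (P : Measure Ω) [IsProbabilityMeasure P]
    (α ρ : ℝ) (hα : 0 < α) (hρ : 0 < ρ)
    (η : Fin n → Ω → EuclideanSpace ℝ (Fin d))
    (hiid : IsIIDSemiProduct P α ρ η)
    (δ : ℝ) (hδ : δ ∈ Set.Ioo (0 : ℝ) 1) :
    ENNReal.ofReal (1 - δ) ≤
      P {ω | ‖(n : ℝ)⁻¹ • ∑ i, clipVec (2 * ρ) (η i ω)‖ ≤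
        10 * ρ * Real.sqrt ((d + Real.log (1 / δ)) / n)} :=
  gradient_bound_semiProduct_general P α ρ hρ η hiid δ hδ

end
end
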